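/- Let x₁, …, x_N be pairwise distinct points in ℝ^d and let C > 0. Then the N × N multiquadric kernel matrix K with entries K_{ij} = √(C² + ‖x_i − x_j‖²) (Euclidean norm) is invertible. -/

import Mathlib

/-!
Micchelli's argument. Substituting `s ↦ a s` shows that `√a` is a fixed positive multiple of
`∫₀^∞ s^(-3/2) (1 - e^(-a s)) ds` for every `a ≥ 0`. For `v ≠ 0` with `∑ vᵢ = 0` the constant
part of the integrand cancels, so `vᵀ K v` is a negative multiple of
`∫₀^∞ s^(-3/2) e^(-C² s) vᵀ G_s v ds` with `G_s = (e^(-s ‖xᵢ - xⱼ‖²))` the Gaussian kernel matrix.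
Up to a diagonal congruence `G_s` is the entrywise exponential of a Gram matrix, hence positive
semidefinite by the Schur product theorem, and `G_s → 1` as `s → ∞` because the nodes are
distinct; so the integral is positive and `K` is negative definite on `∑ vᵢ = 0`. A kernel
vector of the symmetric matrix `K` would then force `vᵀ K v ≤ 0` for all `v`, contradicting
`Kᵢᵢ = C > 0`.
-/

open MeasureTheory Set Filter Topology Real Matrix
open scoped ComplexOrder

theorem setIntegral_pos_of_continuousOn {α : Type*} [TopologicalSpace α] [MeasurableSpace α]
    [OpensMeasurableSpace α] {μ : Measure α} [μ.IsOpenPosMeasure] {f : α → ℝ} {U : Set α}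
    (hU : IsOpen U) (hf : ContinuousOn f U) (hfi : IntegrableOn f U μ)
    (hf_nonneg : ∀ x ∈ U, 0 ≤ f x) {x₀ : α} (hx₀ : x₀ ∈ U) (hfx₀ : 0 < f x₀) :
    0 < ∫ x in U, f x ∂μ := by
  rw [setIntegral_pos_iff_support_of_nonneg_ae
    (ae_restrict_of_forall_mem hU.measurableSet hf_nonneg) hfi]
  refine ((hf.isOpen_inter_preimage hU isOpen_Ioi).measure_pos μ ⟨x₀, hx₀, hfx₀⟩).trans_le ?_
  exact measure_mono fun x hx => ⟨hx.2.ne', hx.1⟩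

section SqrtIntegral

noncomputable def sqrtIntegrand (a s : ℝ) : ℝ := s ^ (-(3 / 2 : ℝ)) * (1 - exp (-(a * s)))

theorem sqrtIntegrand_nonneg {a s : ℝ} (ha : 0 ≤ a) (hs : 0 ≤ s) : 0 ≤ sqrtIntegrand a s :=
  mul_nonneg (rpow_nonneg hs _) (sub_nonneg.2 (exp_le_one_iff.2 (by nlinarith)))

theorem continuousOn_sqrtIntegrand (a : ℝ) : ContinuousOn (sqrtIntegrand a) (Ioi 0) :=
  (continuousOn_id.rpow_const fun _ hs => Or.inl (ne_of_gt hs)).mul (by fun_prop)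

theorem integrableOn_sqrtIntegrand {a : ℝ} (ha : 0 ≤ a) :
    IntegrableOn (sqrtIntegrand a) (Ioi 0) := by
  rw [← Ioc_union_Ioi_eq_Ioi zero_le_one, integrableOn_union]
  constructor
  · have hdom : IntegrableOn (fun s : ℝ => a * s ^ (-(1 / 2 : ℝ))) (Ioc 0 1) :=
      ((intervalIntegral.intervalIntegrable_rpow' (by norm_num)).1).const_mul a
    refine hdom.mono'
      (((continuousOn_sqrtIntegrand a).mono Ioc_subset_Ioi_self).aestronglyMeasurable
        measurableSet_Ioc)
      (ae_restrict_of_forall_mem measurableSet_Ioc fun s ⟨hs, _⟩ => ?_)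
    rw [norm_of_nonneg (sqrtIntegrand_nonneg ha hs.le)]
    calc sqrtIntegrand a s ≤ s ^ (-(3 / 2 : ℝ)) * (a * s) :=
          mul_le_mul_of_nonneg_left (by linarith [add_one_le_exp (-(a * s))])
            (rpow_nonneg hs.le _)
      _ = a * s ^ (-(1 / 2 : ℝ)) := by
          rw [mul_left_comm, ← rpow_add_one hs.ne']
          norm_num
  · have hdom : IntegrableOn (fun s : ℝ => s ^ (-(3 / 2 : ℝ))) (Ioi 1) :=
      integrableOn_Ioi_rpow_of_lt (by norm_num) zero_lt_one
    refine hdom.mono'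
      (((continuousOn_sqrtIntegrand a).mono (Ioi_subset_Ioi zero_le_one)).aestronglyMeasurable
        measurableSet_Ioi)
      (ae_restrict_of_forall_mem measurableSet_Ioi fun s (hs : 1 < s) => ?_)
    have hs₀ : 0 < s := zero_lt_one.trans hs
    rw [norm_of_nonneg (sqrtIntegrand_nonneg ha hs₀.le)]
    exact mul_le_of_le_one_right (rpow_nonneg hs₀.le _) (by linarith [exp_pos (-(a * s))])

theorem integral_sqrtIntegrand {a : ℝ} (ha : 0 ≤ a) :
    ∫ s in Ioi 0, sqrtIntegrand a s = √a * ∫ s in Ioi 0, sqrtIntegrand 1 s := by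
  rcases ha.eq_or_lt with rfl | ha
  · simp [sqrtIntegrand]
  have hscale : ∀ s ∈ Ioi (0 : ℝ),
      sqrtIntegrand a s = a ^ (3 / 2 : ℝ) * sqrtIntegrand 1 (a * s) := by
    intro s (hs : 0 < s)
    rw [sqrtIntegrand, sqrtIntegrand, one_mul, mul_rpow ha.le hs.le, ← mul_assoc, ← mul_assoc,
      ← rpow_add ha]
    norm_num
  rw [setIntegral_congr_fun measurableSet_Ioi hscale, integral_const_mul,
    integral_comp_mul_left_Ioi (sqrtIntegrand 1) 0 ha, mul_zero, smul_eq_mul, ← mul_assoc,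
    ← rpow_neg_one, ← rpow_add ha, sqrt_eq_rpow]
  norm_num

theorem integral_sqrtIntegrand_one_pos : 0 < ∫ s in Ioi 0, sqrtIntegrand 1 s :=
  setIntegral_pos_of_continuousOn isOpen_Ioi (continuousOn_sqrtIntegrand 1)
    (integrableOn_sqrtIntegrand zero_le_one)
    (fun _ hs => sqrtIntegrand_nonneg zero_le_one (le_of_lt hs)) (mem_Ioi.2 zero_lt_one)
    (by simp [sqrtIntegrand])

end SqrtIntegral

namespace Matrix

variable {ι R : Type*} [Fintype ι]

theorem dotProduct_mulVec_eq_sum [CommSemiring R] (v : ι → R) (M : Matrix ι ι R) :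
    v ⬝ᵥ (M *ᵥ v) = ∑ i, ∑ j, v i * v j * M i j := by
  simp only [dotProduct, mulVec, Finset.mul_sum]
  exact Finset.sum_congr rfl fun i _ => Finset.sum_congr rfl fun j _ => by ring

theorem PosSemidef.map_pow {𝕜 : Type*} [RCLike 𝕜] {A : Matrix ι ι 𝕜} (hA : A.PosSemidef)
    (n : ℕ) : (A.map (· ^ n)).PosSemidef := by
  induction n with
  | zero =>
    convert posSemidef_vecMulVec_self_star (fun _ : ι => (1 : 𝕜))
    ext
    simp [vecMulVec]
  | succ n ih =>
    convert ih.hadamard hA using 1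
    ext
    simp [pow_succ]

theorem PosSemidef.map_exp {A : Matrix ι ι ℝ} (hA : A.PosSemidef) : (A.map exp).PosSemidef := by
  refine .of_dotProduct_mulVec_nonneg (hA.isHermitian.map exp fun _ => rfl) fun v => ?_
  have hsum : HasSum (fun n : ℕ => v ⬝ᵥ (A.map (· ^ n) *ᵥ v) / n.factorial)
      (v ⬝ᵥ (A.map exp *ᵥ v)) := by
    simp only [dotProduct_mulVec_eq_sum, Finset.sum_div, map_apply]
    refine hasSum_sum fun i _ => hasSum_sum fun j _ => ?_
    simpa [mul_div_assoc, exp_eq_exp_ℝ] using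
      (NormedSpace.expSeries_div_hasSum_exp (A i j)).mul_left (v i * v j)
  simpa using hsum.nonneg fun n =>
    div_nonneg (by simpa using (hA.map_pow n).dotProduct_mulVec_nonneg v) (by positivity)

def CondNegDef [CommRing R] [PartialOrder R] (A : Matrix ι ι R) : Prop :=
  ∀ v : ι → R, v ≠ 0 → ∑ i, v i = 0 → v ⬝ᵥ (A *ᵥ v) < 0

theorem CondNegDef.isUnit [Field R] [LinearOrder R] [IsStrictOrderedRing R] [DecidableEq ι]
    {A : Matrix ι ι R} (hA : A.CondNegDef) (hsymm : A.IsSymm) (hdiag : ∀ i, 0 < A i i) :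
    IsUnit A := by
  rw [isUnit_iff_isUnit_det, isUnit_iff_ne_zero]
  intro hdet
  obtain ⟨v, hv, hAv⟩ := exists_mulVec_eq_zero_iff.2 hdet
  have hvA : v ᵥ* A = 0 := by rw [← mulVec_transpose, hsymm.eq, hAv]
  have hshift (w : ι → R) (t : R) : (w + t • v) ⬝ᵥ (A *ᵥ (w + t • v)) = w ⬝ᵥ (A *ᵥ w) := by
    simp [mulVec_add, mulVec_smul, hAv, add_dotProduct, dotProduct_mulVec v, hvA]
  by_cases hsum : ∑ i, v i = 0
  · simpa [hAv] using hA v hv hsum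
  -- shifting `eᵢ` along `v` lands in the hyperplane `∑ uⱼ = 0`, so `A i i = eᵢᵀ A eᵢ ≤ 0`
  obtain ⟨i, -⟩ := Function.ne_iff.1 hv
  let u : ι → R := Pi.single i 1 + (-1 / ∑ j, v j) • v
  have hu : ∑ j, u j = 0 := by
    simp [u, Finset.sum_add_distrib, ← Finset.mul_sum, hsum]
  have hle : u ⬝ᵥ (A *ᵥ u) ≤ 0 := by
    by_cases h0 : u = 0
    · simp [h0]
    · exact (hA u h0 hu).le
  rw [hshift, mulVec_single_one, single_one_dotProduct] at hle
  exact (hdiag i).not_ge hle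

end Matrix

section Multiquadric

variable {ι E : Type*} [NormedAddCommGroup E]

noncomputable def gaussianMatrix (x : ι → E) (s : ℝ) : Matrix ι ι ℝ :=
  of fun i j => exp (-(s * ‖x i - x j‖ ^ 2))

theorem continuous_gaussianMatrix (x : ι → E) : Continuous (gaussianMatrix x) :=
  continuous_matrix fun i j => by unfold gaussianMatrix; fun_prop

theorem tendsto_gaussianMatrix_atTop [DecidableEq ι] {x : ι → E} (hx : Function.Injective x) :
    Tendsto (gaussianMatrix x) atTop (𝓝 1) := by
  refine tendsto_pi_nhds.2 fun i => tendsto_pi_nhds.2 fun j => ?_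
  rcases eq_or_ne i j with rfl | hij
  · simp [gaussianMatrix]
  · have hdist : 0 < ‖x i - x j‖ ^ 2 := pow_pos (norm_pos_iff.2 (sub_ne_zero.2 (hx.ne hij))) 2
    simpa [gaussianMatrix, hij] using tendsto_id.atTop_mul_const hdist

variable [Fintype ι]

theorem posSemidef_gaussianMatrix [InnerProductSpace ℝ E] (x : ι → E) {s : ℝ} (hs : 0 ≤ s) :
    (gaussianMatrix x s).PosSemidef := by
  classical
  let d : ι → ℝ := fun i => exp (-(s * ‖x i‖ ^ 2))
  have hfactor :
      gaussianMatrix x s = diagonal d * ((2 * s) • gram ℝ x).map exp * (diagonal d)ᴴ := by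
    ext i j
    simp only [gaussianMatrix, d, of_apply, diagonal_mul, mul_diagonal, map_apply,
      Matrix.smul_apply, gram_apply, diagonal_conjTranspose, star_trivial, norm_sub_sq_real,
      smul_eq_mul, ← exp_add]
    ring_nf
  rw [hfactor]
  exact (PosSemidef.map_exp ((posSemidef_gram ℝ x).smul (a := 2 * s) (by positivity)))
    |>.mul_mul_conjTranspose_same _

theorem sum_sqrtIntegrand_eq (c : ℝ) (x : ι → E) {v : ι → ℝ} (hv : ∑ i, v i = 0) (s : ℝ) :
    ∑ i, ∑ j, v i * v j * sqrtIntegrand (c + ‖x i - x j‖ ^ 2) s =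
      -(s ^ (-(3 / 2 : ℝ)) * exp (-(c * s)) * (v ⬝ᵥ (gaussianMatrix x s *ᵥ v))) := by
  have hterm (i j : ι) : v i * v j * sqrtIntegrand (c + ‖x i - x j‖ ^ 2) s =
      s ^ (-(3 / 2 : ℝ)) * (v i * v j) -
        s ^ (-(3 / 2 : ℝ)) * exp (-(c * s)) * (v i * v j * gaussianMatrix x s i j) := by
    rw [sqrtIntegrand, gaussianMatrix, of_apply,
      show -((c + ‖x i - x j‖ ^ 2) * s) = -(c * s) + -(s * ‖x i - x j‖ ^ 2) by ring, exp_add]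
    ring
  simp only [hterm, Finset.sum_sub_distrib, ← Finset.mul_sum, hv, dotProduct_mulVec_eq_sum]
  simp

theorem integrableOn_gaussianQuadForm {c : ℝ} (hc : 0 ≤ c) (x : ι → E) {v : ι → ℝ}
    (hv : ∑ i, v i = 0) :
    IntegrableOn
      (fun s => s ^ (-(3 / 2 : ℝ)) * exp (-(c * s)) * (v ⬝ᵥ (gaussianMatrix x s *ᵥ v)))
      (Ioi 0) := by
  have hsum := integrable_finsetSum Finset.univ fun i _ => integrable_finsetSum Finset.univ
    fun j _ => (integrableOn_sqrtIntegrand (a := c + ‖x i - x j‖ ^ 2) (by positivity)).const_mul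
      (v i * v j)
  simpa [IntegrableOn, sum_sqrtIntegrand_eq c x hv] using hsum.neg

theorem multiquadric_quadForm_eq_integral {c : ℝ} (hc : 0 ≤ c) (x : ι → E) {v : ι → ℝ}
    (hv : ∑ i, v i = 0) :
    v ⬝ᵥ (of (fun i j => √(c + ‖x i - x j‖ ^ 2)) *ᵥ v) =
      -(∫ s in Ioi 0, s ^ (-(3 / 2 : ℝ)) * exp (-(c * s)) * (v ⬝ᵥ (gaussianMatrix x s *ᵥ v))) /
        ∫ s in Ioi 0, sqrtIntegrand 1 s := by
  have hint (i j : ι) :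
      IntegrableOn (fun s => v i * v j * sqrtIntegrand (c + ‖x i - x j‖ ^ 2) s) (Ioi 0) :=
    (integrableOn_sqrtIntegrand (by positivity)).const_mul _
  have hsqrt (i j : ι) : √(c + ‖x i - x j‖ ^ 2) =
      (∫ s in Ioi 0, sqrtIntegrand (c + ‖x i - x j‖ ^ 2) s) / ∫ s in Ioi 0, sqrtIntegrand 1 s := by
    rw [integral_sqrtIntegrand (by positivity),
      mul_div_cancel_right₀ _ integral_sqrtIntegrand_one_pos.ne']
  simp_rw [← integral_neg, ← sum_sqrtIntegrand_eq c x hv, dotProduct_mulVec_eq_sum, of_apply,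
    hsqrt, integral_finsetSum _ fun i _ => integrable_finsetSum _ fun j _ => hint i j,
    integral_finsetSum _ fun j _ => hint _ j, integral_const_mul, Finset.sum_div, mul_div_assoc]

theorem condNegDef_multiquadric [InnerProductSpace ℝ E] {c : ℝ} (hc : 0 ≤ c) {x : ι → E}
    (hx : Function.Injective x) : (of fun i j => √(c + ‖x i - x j‖ ^ 2)).CondNegDef := by
  classical
  intro v hv hsum
  rw [multiquadric_quadForm_eq_integral hc x hsum]
  refine div_neg_of_neg_of_pos (neg_neg_of_pos ?_) integral_sqrtIntegrand_one_pos
  have hquad : Continuous fun M : Matrix ι ι ℝ => v ⬝ᵥ (M *ᵥ v) :=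
    continuous_const.dotProduct (continuous_id.matrix_mulVec continuous_const)
  have hlim : Tendsto (fun s => v ⬝ᵥ (gaussianMatrix x s *ᵥ v)) atTop (𝓝 (v ⬝ᵥ v)) := by
    simpa [Function.comp_def] using (hquad.tendsto 1).comp (tendsto_gaussianMatrix_atTop hx)
  have hvv : 0 < v ⬝ᵥ v := by simpa using dotProduct_self_star_pos_iff.2 hv
  obtain ⟨s₀, hs₀, hq⟩ :=
    ((eventually_gt_atTop 0).and (hlim.eventually (eventually_gt_nhds hvv))).exists
  refine setIntegral_pos_of_continuousOn isOpen_Ioi ?_ (integrableOn_gaussianQuadForm hc x hsum)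
    (fun s (hs : 0 < s) => ?_) (mem_Ioi.2 hs₀) (by positivity)
  · exact ((continuousOn_id.rpow_const fun _ hs => Or.inl (ne_of_gt hs)).mul (by fun_prop)).mul
      (hquad.comp (continuous_gaussianMatrix x)).continuousOn
  · have := (posSemidef_gaussianMatrix x hs.le).dotProduct_mulVec_nonneg v
    rw [star_trivial] at this
    positivity

end Multiquadric

/-- Micchelli's theorem for the multiquadric kernel: for pairwise distinct nodes
`x₁, …, x_N` in `ℝ^d` and shape parameter `C > 0`, the matrix
`K_{ij} = √(C² + ‖x_i − x_j‖²)` is invertible. -/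
theorem multiquadric_matrix_invertible (d N : ℕ) (C : ℝ) (hC : 0 < C)
    (x : Fin N → EuclideanSpace ℝ (Fin d))
    (hx : Function.Injective x) :
    IsUnit (Matrix.of fun i j : Fin N => Real.sqrt (C ^ 2 + ‖x i - x j‖ ^ 2)) := by
  refine (condNegDef_multiquadric (sq_nonneg C) hx).isUnit ?_ fun i => ?_
  · ext i j
    simp [norm_sub_rev]
  · simpa using pow_pos hC 2
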